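/- arXiv:1706.06244 — 3 statements merged into one kernel-verified Lean document; each statement's English description precedes it below -/
import Mathlib

section
/- Fix α > 0 and positive integers n and ℓ. Let ρ_1, …, ρ_ℓ be positive real numbers and let X_1, …, X_ℓ be independent random variables such that X_i has distribution Geom( ρ_i n^α / (1 + ρ_i n^α) ), i.e. geometric with mean ρ_i n^α. Set S = X_1 + ⋯ + X_ℓ and ρ⁺ = max{ρ_1, …, ρ_ℓ}. Then for every a ≥ ρ⁺, (1/ℓ)·log P( S ≥ ℓ a n^α ) ≤ − I_{ρ⁺}(a) + (a/n^α)·( 1/ρ⁺ − 1/a )². -/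
/-!
Each summand is dominated, in the sense of moment generating functions, by a geometric variable
of mean `r = ρ⁺ n^α`. Chernoff's bound at the exponential tilt that is optimal for that geometric
law bounds `P(S ≥ ℓ A)`, `A = a n^α`, by `exp (-ℓ J(A))`, where `J` is the Cramér rate function
of the geometric law of mean `r`. Finally `log x ≥ 1 - 1/x` gives `J(A) ≥ I_r(A) - A (1/r - 1/A)²`,
and `I_r(A) = I_{ρ⁺}(a)` by scale invariance.
-/

open MeasureTheory ProbabilityTheory

/-- The large deviations rate function of an exponential distribution of mean `ρ`. -/
noncomputable def expRate (ρ a : ℝ) : ℝ :=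
  a / ρ - 1 - Real.log (a / ρ)

open Real

section Geometric

variable {Ω : Type*} [MeasurableSpace Ω] {μ : Measure Ω} {X : Ω → ℕ} {θ t : ℝ}

lemma lintegral_ofReal_exp_mul_of_geometric (hX : Measurable X) (hθ₀ : 0 ≤ θ) (hθ₁ : θ ≤ 1)
    (ht : θ * exp t < 1) (hgeom : ∀ k, μ {ω | X ω = k} = ENNReal.ofReal ((1 - θ) * θ ^ k)) :
    ∫⁻ ω, ENNReal.ofReal (exp (t * X ω)) ∂μ = ENNReal.ofReal ((1 - θ) / (1 - θ * exp t)) := by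
  have hq : 0 ≤ θ * exp t := by positivity
  have hθ₁' : 0 ≤ 1 - θ := sub_nonneg.2 hθ₁
  calc ∫⁻ ω, ENNReal.ofReal (exp (t * X ω)) ∂μ
      = ∫⁻ k : ℕ, ENNReal.ofReal (exp (t * k)) ∂(μ.map X) :=
        (lintegral_map (measurable_of_countable fun k : ℕ => ENNReal.ofReal (exp (t * k))) hX).symm
    _ = ∑' k : ℕ, ENNReal.ofReal ((1 - θ) * (θ * exp t) ^ k) := by
        rw [lintegral_countable']
        congr 1 with k
        rw [Measure.map_apply hX (measurableSet_singleton k)]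
        simp only [Set.preimage, Set.mem_singleton_iff]
        rw [hgeom, ← ENNReal.ofReal_mul (exp_pos _).le, mul_pow, ← exp_nat_mul, mul_comm t]
        ring_nf
    _ = ENNReal.ofReal ((1 - θ) / (1 - θ * exp t)) := by
        rw [← ENNReal.ofReal_tsum_of_nonneg (fun k => mul_nonneg hθ₁' (pow_nonneg hq k))
          ((summable_geometric_of_lt_one hq ht).mul_left _), tsum_mul_left,
          tsum_geometric_of_lt_one hq ht, div_eq_mul_inv]

lemma integrable_exp_mul_of_geometric (hX : Measurable X) (hθ₀ : 0 ≤ θ) (hθ₁ : θ ≤ 1)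
    (ht : θ * exp t < 1) (hgeom : ∀ k, μ {ω | X ω = k} = ENNReal.ofReal ((1 - θ) * θ ^ k)) :
    Integrable (fun ω => exp (t * X ω)) μ := by
  refine ⟨by fun_prop, ?_⟩
  rw [hasFiniteIntegral_iff_ofReal (ae_of_all _ fun ω => (exp_pos _).le),
    lintegral_ofReal_exp_mul_of_geometric hX hθ₀ hθ₁ ht hgeom]
  exact ENNReal.ofReal_lt_top

lemma mgf_of_geometric (hX : Measurable X) (hθ₀ : 0 ≤ θ) (hθ₁ : θ ≤ 1)
    (ht : θ * exp t < 1) (hgeom : ∀ k, μ {ω | X ω = k} = ENNReal.ofReal ((1 - θ) * θ ^ k)) :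
    mgf (fun ω => (X ω : ℝ)) μ t = (1 - θ) / (1 - θ * exp t) := by
  rw [mgf, integral_eq_lintegral_of_nonneg_ae (ae_of_all _ fun ω => (exp_pos _).le)
    (by fun_prop), lintegral_ofReal_exp_mul_of_geometric hX hθ₀ hθ₁ ht hgeom,
    ENNReal.toReal_ofReal (div_nonneg (sub_nonneg.2 hθ₁) (sub_nonneg.2 ht.le))]

lemma measure_ge_pos_of_geometric (hθ₀ : 0 < θ) (hθ₁ : θ < 1)
    (hgeom : ∀ k, μ {ω | X ω = k} = ENNReal.ofReal ((1 - θ) * θ ^ k)) (c : ℝ) :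
    0 < μ {ω | c ≤ X ω} := by
  obtain ⟨K, hK⟩ := exists_nat_ge c
  have hK_le : {ω | X ω = K} ⊆ {ω | c ≤ X ω} := fun ω (hω : X ω = K) =>
    show c ≤ (X ω : ℝ) from hω ▸ hK
  refine lt_of_lt_of_le ?_ (measure_mono hK_le)
  rw [hgeom]
  exact ENNReal.ofReal_pos.2 (mul_pos (sub_pos.2 hθ₁) (pow_pos hθ₀ K))

end Geometric

/-- The Cramér rate function of the geometric distribution of mean `r`. -/
noncomputable def geomRate (r A : ℝ) : ℝ :=
  A * log (A / r) - (1 + A) * log ((1 + A) / (1 + r))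

lemma log_div_sub_log_one_add_div {r A : ℝ} (hr : 0 < r) (hA : 0 < A) :
    log (A / r) - log ((1 + A) / (1 + r)) = log (A * (1 + r) / (r * (1 + A))) := by
  rw [← log_div (by positivity) (by positivity)]
  congr 1
  field_simp

lemma expRate_sub_le_geomRate {r A : ℝ} (hr : 0 < r) (hrA : r ≤ A) :
    expRate r A - A * (1 / r - 1 / A) ^ 2 ≤ geomRate r A := by
  have hA : 0 < A := hr.trans_le hrA
  set t := A * (1 + r) / (r * (1 + A))
  have hlog := log_div_sub_log_one_add_div hr hA
  have hlog_t : 1 - r * (1 + A) / (A * (1 + r)) ≤ log t := by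
    simpa only [t, inv_div] using one_sub_inv_le_log_of_pos (show 0 < t by positivity)
  have hgap : A / r - 1 - A * (1 / r - 1 / A) ^ 2 - (1 + A) * (1 - r * (1 + A) / (A * (1 + r)))
      = -(A - r) ^ 2 / (r ^ 2 * A * (1 + r)) := by
    field_simp
    ring
  have hgap_nonpos : -(A - r) ^ 2 / (r ^ 2 * A * (1 + r)) ≤ 0 :=
    div_nonpos_of_nonpos_of_nonneg (neg_nonpos.2 (sq_nonneg _)) (by positivity)
  unfold expRate geomRate
  nlinarith [mul_le_mul_of_nonneg_left hlog_t (by linarith : (0 : ℝ) ≤ 1 + A)]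

lemma expRate_mul_mul {c ρ a : ℝ} (hc : c ≠ 0) : expRate (c * ρ) (c * a) = expRate ρ a := by
  rw [expRate, expRate, mul_div_mul_left _ _ hc]

section Tail

variable {Ω ι : Type*} [MeasurableSpace Ω] {μ : Measure Ω} [IsFiniteMeasure μ] [Fintype ι]

lemma measure_sum_ge_le_of_geometric {X : ι → Ω → ℕ} {m : ι → ℝ} {r s : ℝ}
    (hX : ∀ i, Measurable (X i)) (hindep : iIndepFun X μ)
    (hgeom : ∀ i k, μ {ω | X i ω = k} =
      ENNReal.ofReal ((1 - m i / (1 + m i)) * (m i / (1 + m i)) ^ k))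
    (hm : ∀ i, 0 ≤ m i) (hmr : ∀ i, m i ≤ r) (hs : 0 ≤ s) (hrs : r * (exp s - 1) < 1) (c : ℝ) :
    μ.real {ω | c ≤ ∑ i, (X i ω : ℝ)} ≤
      exp (-s * c) * (1 - r * (exp s - 1))⁻¹ ^ Fintype.card ι := by
  set Y : ι → Ω → ℝ := fun i ω => X i ω
  have hY : ∀ i, Measurable (Y i) := fun i => (measurable_of_countable _).comp (hX i)
  have hindepY : iIndepFun Y μ := hindep.comp _ fun _ => measurable_of_countable _
  have hes : 0 ≤ exp s - 1 := sub_nonneg.2 (one_le_exp hs)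
  have hθ : ∀ i, 0 ≤ m i / (1 + m i) ∧ m i / (1 + m i) ≤ 1 ∧ m i / (1 + m i) * exp s < 1 := by
    intro i
    have h1m : 0 < 1 + m i := by linarith [hm i]
    refine ⟨div_nonneg (hm i) h1m.le, (div_le_one h1m).2 (by linarith), ?_⟩
    rw [div_mul_eq_mul_div, div_lt_one h1m]
    nlinarith [mul_le_mul_of_nonneg_right (hmr i) hes]
  have hmgf : ∀ i, mgf (Y i) μ s ≤ (1 - r * (exp s - 1))⁻¹ := by
    intro i
    obtain ⟨hθ₀, hθ₁, hθs⟩ := hθ i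
    have h1m : 0 < 1 + m i := by linarith [hm i]
    have hmgf_eq : mgf (Y i) μ s = (1 - m i * (exp s - 1))⁻¹ := by
      rw [mgf_of_geometric (hX i) hθ₀ hθ₁ hθs (hgeom i)]
      field_simp
      ring
    rw [hmgf_eq]
    exact inv_anti₀ (by linarith) (by linarith [mul_le_mul_of_nonneg_right (hmr i) hes])
  calc μ.real {ω | c ≤ ∑ i, (X i ω : ℝ)} = μ.real {ω | c ≤ (∑ i, Y i) ω} := by
        simp only [Y, Finset.sum_apply]
    _ ≤ exp (-s * c) * mgf (∑ i, Y i) μ s :=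
        measure_ge_le_exp_mul_mgf c hs (hindepY.integrable_exp_mul_sum hY fun i _ =>
          integrable_exp_mul_of_geometric (hX i) (hθ i).1 (hθ i).2.1 (hθ i).2.2 (hgeom i))
    _ = exp (-s * c) * ∏ i, mgf (Y i) μ s := by rw [hindepY.mgf_sum hY]
    _ ≤ exp (-s * c) * ∏ _i : ι, (1 - r * (exp s - 1))⁻¹ :=
        mul_le_mul_of_nonneg_left (Finset.prod_le_prod (fun i _ => mgf_nonneg) fun i _ => hmgf i)
          (exp_pos _).le
    _ = exp (-s * c) * (1 - r * (exp s - 1))⁻¹ ^ Fintype.card ι := by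
        rw [Finset.prod_const, Finset.card_univ]

lemma measure_sum_ge_le_exp_geomRate {X : ι → Ω → ℕ} {m : ι → ℝ} {r A : ℝ}
    (hX : ∀ i, Measurable (X i)) (hindep : iIndepFun X μ)
    (hgeom : ∀ i k, μ {ω | X i ω = k} =
      ENNReal.ofReal ((1 - m i / (1 + m i)) * (m i / (1 + m i)) ^ k))
    (hm : ∀ i, 0 ≤ m i) (hmr : ∀ i, m i ≤ r) (hr : 0 < r) (hrA : r ≤ A) :
    μ.real {ω | Fintype.card ι * A ≤ ∑ i, (X i ω : ℝ)} ≤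
      exp (-(Fintype.card ι * geomRate r A)) := by
  have hA : 0 < A := hr.trans_le hrA
  -- `t = exp s` for the tilt `s` that is optimal for the geometric law of mean `r` at level `A`
  set t := A * (1 + r) / (r * (1 + A))
  set Q := (1 + A) / (1 + r)
  have ht : 1 ≤ t := by
    rw [le_div_iff₀ (by positivity)]
    nlinarith
  have htQ : 1 - r * (t - 1) = Q⁻¹ := by
    simp only [t, Q, inv_div]
    field_simp
    ring
  have hrate : geomRate r A = A * log t - log Q := by
    rw [geomRate, ← log_div_sub_log_one_add_div hr hA]
    ring
  have hrt : r * (exp (log t) - 1) < 1 := by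
    rw [exp_log (by positivity)]
    linarith [inv_pos.2 (show 0 < Q by positivity)]
  have hbound := measure_sum_ge_le_of_geometric hX hindep hgeom hm hmr (log_nonneg ht) hrt
    (Fintype.card ι * A)
  rw [exp_log (by positivity), htQ, inv_inv] at hbound
  convert hbound using 1
  rw [hrate, show -(Fintype.card ι * (A * log t - log Q)) =
    -log t * (Fintype.card ι * A) + Fintype.card ι * log Q by ring, exp_add, exp_nat_mul,
    exp_log (by positivity)]

end Tail

theorem geom_sum_upper_tail_concentration_general
    {Ω : Type*} [MeasurableSpace Ω] (μ : Measure Ω) [IsProbabilityMeasure μ]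
    (α : ℝ) (n ℓ : ℕ) (hn : 0 < n)
    (ρ : Fin ℓ → ℝ) (hρ : ∀ i, 0 < ρ i)
    (X : Fin ℓ → Ω → ℕ) (hmeas : ∀ i, Measurable (X i))
    (hindep : iIndepFun X μ)
    (hgeom : ∀ i k, μ {ω | X i ω = k} =
      ENNReal.ofReal
        ((1 - ρ i * (n : ℝ) ^ α / (1 + ρ i * (n : ℝ) ^ α)) *
          (ρ i * (n : ℝ) ^ α / (1 + ρ i * (n : ℝ) ^ α)) ^ k))
    (ρplus : ℝ) (hρplus : IsGreatest (Set.range ρ) ρplus)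
    (a : ℝ) (ha : ρplus ≤ a) :
    (1 / (ℓ : ℝ)) *
        Real.log (μ {ω | (ℓ : ℝ) * a * (n : ℝ) ^ α ≤ ∑ i, (X i ω : ℝ)}).toReal ≤
      - expRate ρplus a + a / (n : ℝ) ^ α * (1 / ρplus - 1 / a) ^ 2 := by
  obtain ⟨⟨i₀, rfl⟩, hmax⟩ := hρplus
  set N := (n : ℝ) ^ α
  have hN : 0 < N := rpow_pos_of_pos (Nat.cast_pos.2 hn) α
  have hℓ : (0 : ℝ) < ℓ := Nat.cast_pos.2 i₀.pos
  have hr : 0 < ρ i₀ * N := mul_pos (hρ i₀) hN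
  have hrA : ρ i₀ * N ≤ a * N := mul_le_mul_of_nonneg_right ha hN.le
  have htail := measure_sum_ge_le_exp_geomRate hmeas hindep hgeom (fun i => (mul_pos (hρ i) hN).le)
    (fun i => mul_le_mul_of_nonneg_right (hmax ⟨i, rfl⟩) hN.le) hr hrA
  rw [Fintype.card_fin, ← mul_assoc] at htail
  have hpos : 0 < μ.real {ω | (ℓ : ℝ) * a * N ≤ ∑ i, (X i ω : ℝ)} := by
    have h1r : 0 < 1 + ρ i₀ * N := by linarith
    have hsingle : {ω | (ℓ : ℝ) * a * N ≤ X i₀ ω} ⊆ {ω | (ℓ : ℝ) * a * N ≤ ∑ i, (X i ω : ℝ)} :=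
      fun ω hω => hω.trans (Finset.single_le_sum (f := fun i => (X i ω : ℝ))
        (fun i _ => Nat.cast_nonneg _) (Finset.mem_univ i₀))
    refine ENNReal.toReal_pos (ne_of_gt ?_) (measure_ne_top _ _)
    exact (measure_ge_pos_of_geometric (div_pos hr h1r) ((div_lt_one h1r).2 (by linarith))
      (hgeom i₀) _).trans_le (measure_mono hsingle)
  calc (1 / (ℓ : ℝ)) * log (μ.real {ω | (ℓ : ℝ) * a * N ≤ ∑ i, (X i ω : ℝ)})
      ≤ (1 / ℓ) * -(ℓ * geomRate (ρ i₀ * N) (a * N)) := by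
        gcongr
        rw [← log_exp (-(ℓ * _))]
        exact log_le_log hpos htail
    _ = -geomRate (ρ i₀ * N) (a * N) := by field_simp
    _ ≤ -expRate (ρ i₀ * N) (a * N) + a * N * (1 / (ρ i₀ * N) - 1 / (a * N)) ^ 2 := by
        linarith [expRate_sub_le_geomRate hr hrA]
    _ = -expRate (ρ i₀) a + a / N * (1 / ρ i₀ - 1 / a) ^ 2 := by
        rw [mul_comm (ρ i₀), mul_comm a, expRate_mul_mul hN.ne']
        field_simp

/-- concentration inequality (upper tail).  Let `X_1, …, X_ℓ` be independent,
`X_i` geometric (on `ℕ₀`, i.e. `P(X_i = k) = (1-θ_i) θ_i^k`) with mean `ρ_i n^α`, i.e. with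
success parameter `θ_i = ρ_i n^α / (1 + ρ_i n^α)`.  With `S = X_1 + ⋯ + X_ℓ` and
`ρ⁺ = max ρ_i`, for every `a ≥ ρ⁺`,
`(1/ℓ) log P(S ≥ ℓ a n^α) ≤ − I_{ρ⁺}(a) + (a/n^α) (1/ρ⁺ − 1/a)²`. -/
theorem geom_sum_upper_tail_concentration
    {Ω : Type*} [MeasurableSpace Ω] (μ : Measure Ω) [IsProbabilityMeasure μ]
    (α : ℝ) (hα : 0 < α) (n ℓ : ℕ) (hn : 0 < n) (hℓ : 0 < ℓ)
    (ρ : Fin ℓ → ℝ) (hρ : ∀ i, 0 < ρ i)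
    (X : Fin ℓ → Ω → ℕ) (hmeas : ∀ i, Measurable (X i))
    (hindep : iIndepFun X μ)
    (hgeom : ∀ i k, μ {ω | X i ω = k} =
      ENNReal.ofReal
        ((1 - ρ i * (n : ℝ) ^ α / (1 + ρ i * (n : ℝ) ^ α)) *
          (ρ i * (n : ℝ) ^ α / (1 + ρ i * (n : ℝ) ^ α)) ^ k))
    (ρplus : ℝ) (hρplus : IsGreatest (Set.range ρ) ρplus)
    (a : ℝ) (ha : ρplus ≤ a) :
    (1 / (ℓ : ℝ)) *
        Real.log (μ {ω | (ℓ : ℝ) * a * (n : ℝ) ^ α ≤ ∑ i, (X i ω : ℝ)}).toReal ≤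
      - expRate ρplus a + a / (n : ℝ) ^ α * (1 / ρplus - 1 / a) ^ 2 :=
  geom_sum_upper_tail_concentration_general μ α n ℓ hn ρ hρ X hmeas hindep hgeom ρplus hρplus a ha
end

section
/- Fix α > 0 and positive integers n and ℓ. Let ρ_1, …, ρ_ℓ be positive real numbers and let X_1, …, X_ℓ be independent random variables such that X_i has distribution Geom( ρ_i n^α / (1 + ρ_i n^α) ), i.e. geometric with mean ρ_i n^α. Set S = X_1 + ⋯ + X_ℓ and ρ⁻ = min{ρ_1, …, ρ_ℓ}. Then for every a with 0 < a ≤ ρ⁻, (1/ℓ)·log P( S ≤ ℓ a n^α ) ≤ − I_{ρ⁻}(a) + (a/n^α)·( 1/ρ⁻ − 1/a )². -/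
open MeasureTheory ProbabilityTheory

/-!
Chernoff's bound for the lower tail: for `t ≤ 0`, `P(S ≤ ℓ m) ≤ e^{-t ℓ m} ∏ᵢ E[e^{t Xᵢ}]`.
The moment generating function of a geometric variable of mean `mᵢ` at `t ≤ 0` is
`(1 + mᵢ (1 - e^t))⁻¹`, which is largest for the smallest mean `M = ρ⁻ n^α`. Choosing for `e^t`
the tilt that turns the geometric law of mean `M` into the one of mean `m = a n^α`, the exponent
per variable is `-m t + log ((1 + m) / (1 + M))`, and `log x ≤ x - 1` bounds it by
`-I_M(m) + m (1/m - 1/M)²`. Finally `I_M(m) = I_{ρ⁻}(a)` by scaling.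
-/

open Real

lemma expRate_mul_right (ρ a : ℝ) {c : ℝ} (hc : c ≠ 0) :
    expRate (ρ * c) (a * c) = expRate ρ a := by
  rw [expRate, expRate, mul_div_mul_right _ _ hc]

/-- The factor `e^t` by which exponential tilting turns the geometric law of mean `M` into the
geometric law of mean `m`. -/
noncomputable def geomTilt (m M : ℝ) : ℝ := m * (1 + M) / (M * (1 + m))

lemma geomTilt_pos {m M : ℝ} (hm : 0 < m) (hM : 0 < M) : 0 < geomTilt m M := by
  unfold geomTilt; positivity

lemma geomTilt_le_one {m M : ℝ} (hm : 0 ≤ m) (hmM : m ≤ M) : geomTilt m M ≤ 1 :=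
  div_le_one_of_le₀ (by nlinarith) (by nlinarith)

lemma one_add_mul_one_sub_geomTilt {m M : ℝ} (hm : 0 ≤ m) (hM : 0 < M) :
    1 + M * (1 - geomTilt m M) = (1 + M) / (1 + m) := by
  unfold geomTilt
  field_simp
  ring

lemma neg_log_geomTilt_mul_add_log_le {m M : ℝ} (hm : 0 < m) (hmM : m ≤ M) :
    -log (geomTilt m M) * m + log ((1 + m) / (1 + M)) ≤
      -expRate M m + m * (1 / m - 1 / M) ^ 2 := by
  have hM : 0 < M := hm.trans_le hmM
  have hE : 0 < geomTilt m M := geomTilt_pos hm hM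
  have hsplit : log ((1 + m) / (1 + M)) = log (m / M) - log (geomTilt m M) := by
    rw [← log_div (by positivity) hE.ne', geomTilt]
    congr 1
    field_simp
  have hlog : -log (geomTilt m M) ≤ (geomTilt m M)⁻¹ - 1 := by
    rw [← log_inv]
    exact log_le_sub_one_of_pos (inv_pos.mpr hE)
  have hpoly : (1 + m) * ((geomTilt m M)⁻¹ - 1) ≤ 1 - m / M + m * (1 / m - 1 / M) ^ 2 := by
    have hgap : 1 - m / M + m * (1 / m - 1 / M) ^ 2 - (1 + m) * ((geomTilt m M)⁻¹ - 1) =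
        (M - m) ^ 2 / (m * M ^ 2 * (1 + M)) := by
      unfold geomTilt
      field_simp
      ring
    have : 0 ≤ (M - m) ^ 2 / (m * M ^ 2 * (1 + M)) := by positivity
    linarith
  have := mul_le_mul_of_nonneg_left hlog (by positivity : (0 : ℝ) ≤ 1 + m)
  rw [expRate, hsplit]
  linarith

lemma inv_natCast_mul_log_le {P t m q : ℝ} {ℓ : ℕ} (hℓ : 0 < ℓ) (hP : 0 < P) (hq : 0 < q)
    (h : P ≤ exp (-t * (ℓ * m)) * q ^ ℓ) : 1 / (ℓ : ℝ) * log P ≤ -t * m + log q := by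
  have hlog := log_le_log hP h
  rw [log_mul (exp_ne_zero _) (by positivity), log_exp, log_pow] at hlog
  rw [one_div_mul_eq_div, div_le_iff₀ (by positivity)]
  linarith

lemma geometric_mgf_eq_inv (m s : ℝ) (hm : 0 ≤ m) :
    (1 - m / (1 + m)) / (1 - m / (1 + m) * s) = (1 + m * (1 - s))⁻¹ := by
  have : 1 + m ≠ 0 := by positivity
  field_simp
  ring_nf

section

variable {Ω : Type*} [MeasurableSpace Ω] {μ : Measure Ω}

lemma mgf_natCast_eq_of_geometric [IsFiniteMeasure μ] {X : Ω → ℕ} (hX : Measurable X)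
    {θ : ℝ} (hθ0 : 0 ≤ θ) (hθ1 : θ < 1)
    (hpmf : ∀ k, μ {ω | X ω = k} = ENNReal.ofReal ((1 - θ) * θ ^ k)) {t : ℝ} (ht : t ≤ 0) :
    mgf (fun ω => (X ω : ℝ)) μ t = (1 - θ) / (1 - θ * exp t) := by
  have hcast : Measurable (fun k : ℕ => exp (t * k)) := measurable_from_top
  have hint : Integrable (fun k : ℕ => exp (t * k)) (μ.map X) := by
    refine (integrable_const 1).mono' hcast.aestronglyMeasurable (ae_of_all _ fun k => ?_)
    rw [Real.norm_of_nonneg (exp_pos _).le, exp_le_one_iff]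
    exact mul_nonpos_of_nonpos_of_nonneg ht k.cast_nonneg
  have hlaw : ∀ k : ℕ, (μ.map X).real {k} = (1 - θ) * θ ^ k := fun k => by
    rw [map_measureReal_apply hX (measurableSet_singleton k), measureReal_def]
    exact (congrArg ENNReal.toReal (hpmf k)).trans
      (ENNReal.toReal_ofReal (mul_nonneg (by linarith) (pow_nonneg hθ0 k)))
  have hr0 : 0 ≤ θ * exp t := by positivity
  have hr1 : θ * exp t < 1 :=
    (mul_le_of_le_one_right hθ0 (exp_le_one_iff.mpr ht)).trans_lt hθ1
  calc mgf (fun ω => (X ω : ℝ)) μ t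
      = ∫ k, exp (t * k) ∂(μ.map X) := by
        rw [mgf, integral_map hX.aemeasurable hcast.aestronglyMeasurable]
    _ = ∑' k : ℕ, (μ.map X).real {k} • exp (t * k) := integral_countable hint
    _ = ∑' k : ℕ, (1 - θ) * (θ * exp t) ^ k := by
        congr 1 with k
        rw [smul_eq_mul, hlaw k, mul_comm t, exp_nat_mul, mul_pow, mul_assoc]
    _ = (1 - θ) / (1 - θ * exp t) := by
        rw [tsum_mul_left, tsum_geometric_of_lt_one hr0 hr1, div_eq_mul_inv]

lemma measure_eq_zero_ne_zero_of_geometric_mean {X : Ω → ℕ} {m : ℝ}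
    (hpmf : ∀ k, μ {ω | X ω = k} = ENNReal.ofReal ((1 - m / (1 + m)) * (m / (1 + m)) ^ k))
    (hm : 0 ≤ m) : μ {ω | X ω = 0} ≠ 0 := by
  rw [hpmf, pow_zero, mul_one, ne_eq, ENNReal.ofReal_eq_zero, not_le, sub_pos,
    div_lt_one (by positivity)]
  linarith

lemma mgf_natCast_log_geomTilt_le_of_geometric_mean [IsFiniteMeasure μ] {X : Ω → ℕ}
    (hX : Measurable X) {m : ℝ}
    (hpmf : ∀ k, μ {ω | X ω = k} = ENNReal.ofReal ((1 - m / (1 + m)) * (m / (1 + m)) ^ k))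
    {m₀ M : ℝ} (hm₀ : 0 < m₀) (hm₀M : m₀ ≤ M) (hMm : M ≤ m) :
    mgf (fun ω => (X ω : ℝ)) μ (log (geomTilt m₀ M)) ≤ (1 + m₀) / (1 + M) := by
  have hM : 0 < M := hm₀.trans_le hm₀M
  have hm : 0 ≤ m := hM.le.trans hMm
  have hE := geomTilt_pos hm₀ hM
  have ht : log (geomTilt m₀ M) ≤ 0 := log_nonpos hE.le (geomTilt_le_one hm₀.le hm₀M)
  rw [mgf_natCast_eq_of_geometric hX (by positivity) ((div_lt_one (by positivity)).mpr
    (by linarith)) hpmf ht, geometric_mgf_eq_inv m _ hm, exp_log hE, ← inv_div,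
    ← one_add_mul_one_sub_geomTilt hm₀.le hM]
  have : 0 ≤ 1 - geomTilt m₀ M := sub_nonneg.mpr (geomTilt_le_one hm₀.le hm₀M)
  gcongr

section Independent

variable {ι : Type*} [Fintype ι]

lemma measureReal_sum_le_le_exp_mul_pow {Y : ι → Ω → ℝ} (hY : ∀ i, Measurable (Y i))
    (hindep : iIndepFun Y μ) (hY0 : ∀ i ω, 0 ≤ Y i ω) {t : ℝ} (ht : t ≤ 0) {q : ℝ}
    (hq : ∀ i, mgf (Y i) μ t ≤ q) (ε : ℝ) :
    μ.real {ω | ∑ i, Y i ω ≤ ε} ≤ exp (-t * ε) * q ^ Fintype.card ι := by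
  have := hindep.isProbabilityMeasure
  have hint : Integrable (fun ω => exp (t * (∑ i, Y i) ω)) μ := by
    refine (integrable_const 1).mono' (by fun_prop) (ae_of_all _ fun ω => ?_)
    rw [Real.norm_of_nonneg (exp_pos _).le, exp_le_one_iff, Finset.sum_apply]
    exact mul_nonpos_of_nonpos_of_nonneg ht (Finset.sum_nonneg fun i _ => hY0 i ω)
  have hmgf : mgf (∑ i, Y i) μ t ≤ q ^ Fintype.card ι := by
    rw [hindep.mgf_sum hY, ← Finset.card_univ, ← Finset.prod_const]
    exact Finset.prod_le_prod (fun i _ => mgf_nonneg) (fun i _ => hq i)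
  calc μ.real {ω | ∑ i, Y i ω ≤ ε} = μ.real {ω | (∑ i, Y i) ω ≤ ε} := by
        simp only [Finset.sum_apply]
    _ ≤ exp (-t * ε) * mgf (∑ i, Y i) μ t := measure_le_le_exp_mul_mgf ε ht hint
    _ ≤ exp (-t * ε) * q ^ Fintype.card ι := by gcongr

lemma ProbabilityTheory.iIndepFun.measure_forall_eq_ne_zero {β : Type*} [MeasurableSpace β]
    [MeasurableSingletonClass β] {X : ι → Ω → β} (hindep : iIndepFun X μ) (b : ι → β)
    (h : ∀ i, μ {ω | X i ω = b i} ≠ 0) : μ {ω | ∀ i, X i ω = b i} ≠ 0 := by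
  have : {ω | ∀ i, X i ω = b i} = ⋂ i, X i ⁻¹' {b i} := by ext; simp
  rw [this, hindep.meas_iInter fun i => ⟨{b i}, measurableSet_singleton _, rfl⟩]
  exact Finset.prod_ne_zero_iff.mpr fun i _ => h i

lemma ProbabilityTheory.iIndepFun.measureReal_sum_natCast_le_pos {X : ι → Ω → ℕ}
    (hindep : iIndepFun X μ) (h : ∀ i, μ {ω | X i ω = 0} ≠ 0) {ε : ℝ} (hε : 0 ≤ ε) :
    0 < μ.real {ω | ∑ i, (X i ω : ℝ) ≤ ε} := by
  have := hindep.isProbabilityMeasure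
  refine ENNReal.toReal_pos ?_ (measure_ne_top _ _)
  refine measure_mono_null (fun ω (hω : ∀ i, X i ω = 0) => ?_) |>.mt
    (hindep.measure_forall_eq_ne_zero (fun _ => 0) h)
  simpa [hω] using hε

end Independent

end

theorem geom_sum_lower_tail_concentration_general
    {Ω : Type*} [MeasurableSpace Ω] (μ : Measure Ω) [IsProbabilityMeasure μ]
    (α : ℝ) (n ℓ : ℕ) (hn : 0 < n) (hℓ : 0 < ℓ)
    (ρ : Fin ℓ → ℝ)
    (X : Fin ℓ → Ω → ℕ) (hmeas : ∀ i, Measurable (X i))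
    (hindep : iIndepFun X μ)
    (hgeom : ∀ i k, μ {ω | X i ω = k} =
      ENNReal.ofReal
        ((1 - ρ i * (n : ℝ) ^ α / (1 + ρ i * (n : ℝ) ^ α)) *
          (ρ i * (n : ℝ) ^ α / (1 + ρ i * (n : ℝ) ^ α)) ^ k))
    (ρminus : ℝ) (hρminus : IsLeast (Set.range ρ) ρminus)
    (a : ℝ) (ha0 : 0 < a) (ha : a ≤ ρminus) :
    (1 / (ℓ : ℝ)) *
        Real.log (μ {ω | (∑ i, (X i ω : ℝ)) ≤ (ℓ : ℝ) * a * (n : ℝ) ^ α}).toReal ≤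
      - expRate ρminus a + a / (n : ℝ) ^ α * (1 / ρminus - 1 / a) ^ 2 := by
  set c := (n : ℝ) ^ α
  have hc : 0 < c := rpow_pos_of_pos (by exact_mod_cast hn) α
  have hm : 0 < a * c := mul_pos ha0 hc
  have hmM : a * c ≤ ρminus * c := mul_le_mul_of_nonneg_right ha hc.le
  have hM : 0 < ρminus * c := hm.trans_le hmM
  have hMi : ∀ i, ρminus * c ≤ ρ i * c := fun i =>
    mul_le_mul_of_nonneg_right (hρminus.2 (Set.mem_range_self i)) hc.le
  set t := log (geomTilt (a * c) (ρminus * c))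
  have hchernoff := measureReal_sum_le_le_exp_mul_pow
    (fun i => measurable_from_top.comp (hmeas i)) (hindep.comp _ fun _ => measurable_from_top)
    (fun i ω => Nat.cast_nonneg (X i ω))
    (log_nonpos (geomTilt_pos hm hM).le (geomTilt_le_one hm.le hmM))
    (fun i => mgf_natCast_log_geomTilt_le_of_geometric_mean (hmeas i) (hgeom i) hm hmM (hMi i))
    ((ℓ : ℝ) * (a * c))
  -- `log 0 = 0`, so the bound needs the event to have positive probability
  have hpos := hindep.measureReal_sum_natCast_le_pos
    (fun i => measure_eq_zero_ne_zero_of_geometric_mean (hgeom i) (hM.le.trans (hMi i)))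
    (by positivity : 0 ≤ (ℓ : ℝ) * (a * c))
  rw [Fintype.card_fin] at hchernoff
  calc _ ≤ -t * (a * c) + log ((1 + a * c) / (1 + ρminus * c)) := by
        rw [mul_assoc]; exact inv_natCast_mul_log_le hℓ hpos (by positivity) hchernoff
    _ ≤ -expRate (ρminus * c) (a * c) + a * c * (1 / (a * c) - 1 / (ρminus * c)) ^ 2 :=
        neg_log_geomTilt_mul_add_log_le hm hmM
    _ = _ := by
        rw [expRate_mul_right _ _ hc.ne']
        field_simp
        ring

/-- concentration inequality (lower tail).  Let `X_1, …, X_ℓ` be independent,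
`X_i` geometric (on `ℕ₀`, i.e. `P(X_i = k) = (1-θ_i) θ_i^k`) with mean `ρ_i n^α`, i.e. with
success parameter `θ_i = ρ_i n^α / (1 + ρ_i n^α)`.  With `S = X_1 + ⋯ + X_ℓ` and
`ρ⁻ = min ρ_i`, for every `0 < a ≤ ρ⁻`,
`(1/ℓ) log P(S ≤ ℓ a n^α) ≤ − I_{ρ⁻}(a) + (a/n^α) (1/ρ⁻ − 1/a)²`. -/
theorem geom_sum_lower_tail_concentration
    {Ω : Type*} [MeasurableSpace Ω] (μ : Measure Ω) [IsProbabilityMeasure μ]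
    (α : ℝ) (hα : 0 < α) (n ℓ : ℕ) (hn : 0 < n) (hℓ : 0 < ℓ)
    (ρ : Fin ℓ → ℝ) (hρ : ∀ i, 0 < ρ i)
    (X : Fin ℓ → Ω → ℕ) (hmeas : ∀ i, Measurable (X i))
    (hindep : iIndepFun X μ)
    (hgeom : ∀ i k, μ {ω | X i ω = k} =
      ENNReal.ofReal
        ((1 - ρ i * (n : ℝ) ^ α / (1 + ρ i * (n : ℝ) ^ α)) *
          (ρ i * (n : ℝ) ^ α / (1 + ρ i * (n : ℝ) ^ α)) ^ k))
    (ρminus : ℝ) (hρminus : IsLeast (Set.range ρ) ρminus)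
    (a : ℝ) (ha0 : 0 < a) (ha : a ≤ ρminus) :
    (1 / (ℓ : ℝ)) *
        Real.log (μ {ω | (∑ i, (X i ω : ℝ)) ≤ (ℓ : ℝ) * a * (n : ℝ) ^ α}).toReal ≤
      - expRate ρminus a + a / (n : ℝ) ^ α * (1 / ρminus - 1 / a) ^ 2 :=
  geom_sum_lower_tail_concentration_general μ α n ℓ hn hℓ ρ X hmeas hindep hgeom ρminus hρminus a
    ha0 ha
end

section
/- Fix α ≥ 0 and a positive integer n. Let u, v : [0,∞) → (ℤ/nℤ → [0,∞)) be two solutions of the discrete scheme, i.e. for every x ∈ ℤ/nℤ the maps t ↦ u_t(x) and t ↦ v_t(x) are differentiable with (d/dt) u_t(x) = Δ_n(φ_n ∘ u_t)(x) and (d/dt) v_t(x) = Δ_n(φ_n ∘ v_t)(x) for all t ≥ 0. If u_0(x) ≤ v_0(x) for every x ∈ ℤ/nℤ, then u_t(x) ≤ v_t(x) for every t ≥ 0 and every x ∈ ℤ/nℤ (strong maximum principle / comparison principle). -/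
/-!
The energy `E(t) = ∑ₓ ((u_t(x) - v_t(x))⁺)²` vanishes at `t = 0` and satisfies
`E' ≤ 4 n² n^{2α} E`:
`φ_n` is nondecreasing on `[0, ∞)`, which makes the diagonal term of the Laplacian dissipative,
and one-sidedly Lipschitz with constant `n^{2α}`, which bounds the off-diagonal terms by `E`.
Grönwall's inequality then forces `E ≡ 0`.
-/

/-- `φ_n(u) = n^α φ(n^α u)` with `φ(ρ) = ρ/(1+ρ)`. -/
noncomputable def phin (α : ℝ) (n : ℕ) (u : ℝ) : ℝ :=
  (n : ℝ) ^ α * ((n : ℝ) ^ α * u / (1 + (n : ℝ) ^ α * u))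

/-- The discrete Laplacian on `ℤ/nℤ`: `Δ_n f(x) = n² (f(x+1) + f(x−1) − 2 f(x))`. -/
def discLap (n : ℕ) (f : ZMod n → ℝ) (x : ZMod n) : ℝ :=
  (n : ℝ) ^ 2 * (f (x + 1) + f (x - 1) - 2 * f x)

open Set Filter Topology

section phin

variable {α : ℝ} {n : ℕ} {a b : ℝ}

theorem phin_sub_phin (ha : 0 ≤ a) (hb : 0 ≤ b) :
    phin α n a - phin α n b =
      ((n : ℝ) ^ α) ^ 2 * (a - b) / ((1 + (n : ℝ) ^ α * a) * (1 + (n : ℝ) ^ α * b)) := by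
  have hc : 0 ≤ (n : ℝ) ^ α := Real.rpow_nonneg n.cast_nonneg α
  have : 0 < 1 + (n : ℝ) ^ α * a := by positivity
  have : 0 < 1 + (n : ℝ) ^ α * b := by positivity
  unfold phin
  field_simp
  ring

theorem monotoneOn_phin : MonotoneOn (phin α n) (Ici 0) := by
  intro b hb a ha hab
  have hc : 0 ≤ (n : ℝ) ^ α := Real.rpow_nonneg n.cast_nonneg α
  rw [← sub_nonneg, phin_sub_phin ha hb]
  have : 0 ≤ a - b := sub_nonneg.2 hab
  have : 0 ≤ (n : ℝ) ^ α * a := mul_nonneg hc ha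
  have : 0 ≤ (n : ℝ) ^ α * b := mul_nonneg hc hb
  positivity

theorem phin_sub_phin_le (ha : 0 ≤ a) (hb : 0 ≤ b) :
    phin α n a - phin α n b ≤ ((n : ℝ) ^ α) ^ 2 * max (a - b) 0 := by
  rcases le_total a b with hab | hab
  · calc phin α n a - phin α n b ≤ 0 := sub_nonpos.2 (monotoneOn_phin ha hb hab)
      _ ≤ _ := by positivity
  have hc : 0 ≤ (n : ℝ) ^ α := Real.rpow_nonneg n.cast_nonneg α
  have hD : 1 ≤ (1 + (n : ℝ) ^ α * a) * (1 + (n : ℝ) ^ α * b) :=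
    one_le_mul_of_one_le_of_one_le (by simp; positivity) (by simp; positivity)
  rw [phin_sub_phin ha hb, max_eq_left (sub_nonneg.2 hab)]
  exact div_le_self (by have := sub_nonneg.2 hab; positivity) hD

theorem max_sub_zero_mul_phin_sub_nonneg (ha : 0 ≤ a) (hb : 0 ≤ b) :
    0 ≤ max (a - b) 0 * (phin α n a - phin α n b) := by
  rcases le_total a b with hab | hab
  · simp [sub_nonpos.2 hab]
  · exact mul_nonneg (le_max_right _ _) (sub_nonneg.2 (monotoneOn_phin hb ha hab))

end phin

theorem discLap_sub {n : ℕ} (f g : ZMod n → ℝ) (x : ZMod n) :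
    discLap n f x - discLap n g x = discLap n (fun y => f y - g y) x := by
  simp only [discLap]
  ring

theorem sum_mul_discLap_le {n : ℕ} [NeZero n] {w g : ZMod n → ℝ} {L : ℝ} (hL : 0 ≤ L)
    (hw : ∀ x, 0 ≤ w x) (hwg : ∀ x, 0 ≤ w x * g x) (hg : ∀ x, g x ≤ L * w x) :
    ∑ x, w x * discLap n g x ≤ 2 * (n : ℝ) ^ 2 * L * ∑ x, w x ^ 2 := by
  have hpoint : ∀ x, w x * discLap n g x ≤
      (n : ℝ) ^ 2 * L * (w x ^ 2 + (w (x + 1) ^ 2 + w (x - 1) ^ 2) / 2) := by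
    intro x
    have h₁ := mul_le_mul_of_nonneg_left (hg (x + 1)) (hw x)
    have h₂ := mul_le_mul_of_nonneg_left (hg (x - 1)) (hw x)
    have h₃ := mul_nonneg hL (sq_nonneg (w x - w (x + 1)))
    have h₄ := mul_nonneg hL (sq_nonneg (w x - w (x - 1)))
    unfold discLap
    nlinarith [hwg x, sq_nonneg (n : ℝ)]
  have hshift : ∀ k : ZMod n, ∑ x, w (x + k) ^ 2 = ∑ x, w x ^ 2 := fun k =>
    Fintype.sum_equiv (Equiv.addRight k) _ _ fun _ => rfl
  calc ∑ x, w x * discLap n g x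
      ≤ ∑ x, (n : ℝ) ^ 2 * L * (w x ^ 2 + (w (x + 1) ^ 2 + w (x + -1) ^ 2) / 2) := by
        simpa only [← sub_eq_add_neg] using Finset.sum_le_sum fun x _ => hpoint x
    _ = 2 * (n : ℝ) ^ 2 * L * ∑ x, w x ^ 2 := by
        simp only [← Finset.mul_sum, Finset.sum_add_distrib, ← Finset.sum_div, hshift]
        ring

theorem hasDerivAt_max_zero_sq (y : ℝ) :
    HasDerivAt (fun z : ℝ => max z 0 ^ 2) (2 * max y 0) y := by
  rcases lt_trichotomy y 0 with hy | rfl | hy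
  · refine (hasDerivAt_const y (0 : ℝ)).congr_of_eventuallyEq ?_ |>.congr_deriv (by simp [hy.le])
    filter_upwards [eventually_lt_nhds hy] with z hz
    simp [hz.le]
  · have h : (fun z : ℝ => max z 0 ^ 2) =O[𝓝 0] fun z => ‖z - 0‖ ^ 2 :=
      Asymptotics.IsBigO.of_bound 1 <| Eventually.of_forall fun z => by
        simp only [sub_zero, norm_pow, Real.norm_eq_abs, one_mul, sq_abs]
        rcases le_total z 0 with hz | hz <;> simp [hz, sq_nonneg]
    simpa using (h.hasFDerivAt (by norm_num)).hasDerivAt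
  · refine (hasDerivAt_pow 2 y).congr_of_eventuallyEq ?_ |>.congr_deriv (by simp [hy.le])
    filter_upwards [eventually_gt_nhds hy] with z hz
    simp [hz.le]

theorem hasDerivWithinAt_sum_max_sub_zero_sq {ι : Type*} [Fintype ι] {u v : ℝ → ι → ℝ}
    {u' v' : ι → ℝ} {s : Set ℝ} {t : ℝ}
    (hu : ∀ x, HasDerivWithinAt (u · x) (u' x) s t)
    (hv : ∀ x, HasDerivWithinAt (v · x) (v' x) s t) :
    HasDerivWithinAt (fun r => ∑ x, max (u r x - v r x) 0 ^ 2)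
      (∑ x, 2 * max (u t x - v t x) 0 * (u' x - v' x)) s t :=
  HasDerivWithinAt.fun_sum fun x _ =>
    (hasDerivAt_max_zero_sq _).comp_hasDerivWithinAt t ((hu x).sub (hv x))

theorem nonpos_of_hasDerivWithinAt_le_mul_self {f f' : ℝ → ℝ} {K a : ℝ}
    (hf : ∀ t ∈ Ici a, HasDerivWithinAt f (f' t) (Ici a) t) (ha : f a ≤ 0)
    (bound : ∀ t ∈ Ici a, f' t ≤ K * f t) : ∀ t ∈ Ici a, f t ≤ 0 := by
  intro b hb
  have hcont : ContinuousOn f (Icc a b) := fun t ht =>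
    (hf t ht.1).continuousWithinAt.mono Icc_subset_Ici_self
  have hslope : ∀ t ∈ Ico a b, ∀ r, f' t < r →
      ∃ᶠ z in 𝓝[>] t, (z - t)⁻¹ * (f z - f t) < r := fun t ht r hr => by
    simpa only [slope_def_field, div_eq_inv_mul] using
      ((hf t ht.1).mono (Ici_subset_Ici.2 ht.1)).liminf_right_slope_le hr
  simpa [gronwallBound_ε0_δ0] using
    le_gronwallBound_of_liminf_deriv_right_le (K := K) (ε := 0) hcont hslope ha
      (fun t ht => by simpa using bound t ht.1) b ⟨hb, le_rfl⟩

theorem discrete_scheme_comparison_principle_general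
    (α : ℝ) (n : ℕ) [NeZero n]
    (u v : ℝ → ZMod n → ℝ)
    (hu0 : ∀ t, 0 ≤ t → ∀ x, 0 ≤ u t x)
    (hv0 : ∀ t, 0 ≤ t → ∀ x, 0 ≤ v t x)
    (hu : ∀ t, 0 ≤ t → ∀ x : ZMod n,
      HasDerivWithinAt (fun s => u s x)
        (discLap n (fun y => phin α n (u t y)) x) (Set.Ici 0) t)
    (hv : ∀ t, 0 ≤ t → ∀ x : ZMod n,
      HasDerivWithinAt (fun s => v s x)
        (discLap n (fun y => phin α n (v t y)) x) (Set.Ici 0) t)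
    (hinit : ∀ x, u 0 x ≤ v 0 x) :
    ∀ t, 0 ≤ t → ∀ x, u t x ≤ v t x := by
  set L := ((n : ℝ) ^ α) ^ 2
  set w : ℝ → ZMod n → ℝ := fun t x => max (u t x - v t x) 0
  have hE := fun t (ht : t ∈ Ici (0 : ℝ)) =>
    hasDerivWithinAt_sum_max_sub_zero_sq (hu t ht) (hv t ht)
  have hbound : ∀ t ∈ Ici (0 : ℝ),
      ∑ x, 2 * w t x * (discLap n (fun y => phin α n (u t y)) x -
        discLap n (fun y => phin α n (v t y)) x) ≤ 4 * (n : ℝ) ^ 2 * L * ∑ x, w t x ^ 2 := by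
    intro t ht
    simp only [discLap_sub, mul_assoc, ← Finset.mul_sum]
    have := sum_mul_discLap_le (w := w t)
      (g := fun y => phin α n (u t y) - phin α n (v t y)) (sq_nonneg _)
      (fun x => le_max_right _ _)
      (fun x => max_sub_zero_mul_phin_sub_nonneg (hu0 t ht x) (hv0 t ht x))
      (fun x => phin_sub_phin_le (hu0 t ht x) (hv0 t ht x))
    linarith
  have hE0 : ∑ x, w 0 x ^ 2 ≤ 0 := by simp [w, hinit]
  intro t ht x
  have hEt := nonpos_of_hasDerivWithinAt_le_mul_self hE hE0 hbound t ht
  have : w t x ^ 2 ≤ 0 :=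
    (Finset.single_le_sum (fun y _ => sq_nonneg (w t y)) (Finset.mem_univ x)).trans hEt
  simpa [w] using this

/-- strong maximum / comparison principle: if `u, v` are two nonnegative
solutions of the discrete scheme `(d/dt) u_t(x) = Δ_n(φ_n ∘ u_t)(x)` on `[0,∞)` with
`u_0 ≤ v_0` pointwise, then `u_t(x) ≤ v_t(x)` for all `t ≥ 0` and all `x`. -/
theorem discrete_scheme_comparison_principle
    (α : ℝ) (hα : 0 ≤ α) (n : ℕ) [NeZero n]
    (u v : ℝ → ZMod n → ℝ)
    (hu0 : ∀ t, 0 ≤ t → ∀ x, 0 ≤ u t x)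
    (hv0 : ∀ t, 0 ≤ t → ∀ x, 0 ≤ v t x)
    (hu : ∀ t, 0 ≤ t → ∀ x : ZMod n,
      HasDerivWithinAt (fun s => u s x)
        (discLap n (fun y => phin α n (u t y)) x) (Set.Ici 0) t)
    (hv : ∀ t, 0 ≤ t → ∀ x : ZMod n,
      HasDerivWithinAt (fun s => v s x)
        (discLap n (fun y => phin α n (v t y)) x) (Set.Ici 0) t)
    (hinit : ∀ x, u 0 x ≤ v 0 x) :
    ∀ t, 0 ≤ t → ∀ x, u t x ≤ v t x :=
  discrete_scheme_comparison_principle_general α n u v hu0 hv0 hu hv hinit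
end
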